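/- arXiv:2103.09748 — 6 statements merged into one kernel-verified Lean document; each statement's English description precedes it below -/
import Mathlib

section
/- Let k ≥ 2 be a positive integer and let 0 < η ≤ 1/10. Let X ⊂ ℝ^D be a set of k distinct points. Then there exists a positive integer l with 10 ≤ l ≤ 100 + k(k-1)/2 and a partition of X into nonempty sets X_1,...,X_m such that diam(X_j) ≤ η^l · diam(X) for each j, and dist(X_j, X_{j'}) ≥ η^{l-1} · diam(X) for all j ≠ j'. -/
/-!
Among the `k(k-1)/2` pairwise distances of `X`, at most that many of the disjoint windows
`(η^l diam X, η^(l-1) diam X]`, `10 ≤ l ≤ 100 + k(k-1)/2`, contain a distance, so by pigeonhole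
some window `(e, e']` contains none. Since `2e ≤ e'`, the relation `dist x y ≤ e` is then
transitive on `X`: `dist x z ≤ 2e ≤ e'` forces `dist x z ≤ e`. Its classes, the sets
`X ∩ closedBall x e`, have diameter at most `e` and lie more than `e'` apart.
-/

open Set Metric

lemma Finset.exists_dist_finset_card_le {α : Type*} [PseudoMetricSpace α] [DecidableEq α]
    (s : Finset α) :
    ∃ S : Finset ℝ, S.card ≤ s.card.choose 2 ∧ ∀ x ∈ s, ∀ y ∈ s, x ≠ y → dist x y ∈ S := by
  refine ⟨(s.offDiag.image Sym2.mk.uncurry).image (Sym2.lift ⟨dist, dist_comm⟩), ?_, ?_⟩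
  · exact Finset.card_image_le.trans (Sym2.card_image_offDiag s).le
  · intro x hx y hy hxy
    exact Finset.mem_image.2
      ⟨s(x, y), Finset.mem_image_of_mem _ (Finset.mem_offDiag.2 ⟨hx, hy, hxy⟩), rfl⟩

section GapLevel

variable {η d : ℝ}

lemma disjoint_Ioc_pow_mul (hη0 : 0 ≤ η) (hη1 : η ≤ 1) (hd : 0 ≤ d) {l l' : ℕ} (h : l < l') :
    Disjoint (Ioc (η ^ l * d) (η ^ (l - 1) * d)) (Ioc (η ^ l' * d) (η ^ (l' - 1) * d)) := by
  have : η ^ (l' - 1) * d ≤ η ^ l * d :=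
    mul_le_mul_of_nonneg_right (pow_le_pow_of_le_one hη0 hη1 (by omega)) hd
  exact Set.disjoint_left.2 fun t ht ht' => (ht.1.trans_le (ht'.2.trans this)).false

lemma exists_gap_pow_mul (S : Finset ℝ) (hη0 : 0 ≤ η) (hη1 : η ≤ 1) (hd : 0 ≤ d) {a b : ℕ}
    (hS : S.card + a ≤ b) :
    ∃ l ∈ Finset.Icc a b, ∀ t ∈ S, t ∉ Ioc (η ^ l * d) (η ^ (l - 1) * d) := by
  by_contra! h
  choose! f hfS hf using h
  have hcard : S.card < (Finset.Icc a b).card := by rw [Nat.card_Icc]; omega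
  obtain ⟨l, hl, l', hl', hne, hff⟩ := Finset.exists_ne_map_eq_of_card_lt_of_maps_to hcard hfS
  have hl'f := hff ▸ hf l' hl'
  rcases hne.lt_or_gt with hlt | hlt
  · exact Set.disjoint_left.1 (disjoint_Ioc_pow_mul hη0 hη1 hd hlt) (hf l hl) hl'f
  · exact Set.disjoint_left.1 (disjoint_Ioc_pow_mul hη0 hη1 hd hlt) hl'f (hf l hl)

lemma two_mul_pow_mul_le (hη0 : 0 ≤ η) (hη : η ≤ 1 / 2) (hd : 0 ≤ d) {l : ℕ} (hl : 1 ≤ l) :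
    2 * (η ^ l * d) ≤ η ^ (l - 1) * d := by
  obtain ⟨n, rfl⟩ := Nat.exists_eq_add_of_le' hl
  have : 0 ≤ η ^ n * d := by positivity
  rw [Nat.add_sub_cancel, pow_succ]
  nlinarith

end GapLevel

section GapClusters

variable {α : Type*} [PseudoMetricSpace α] {X : Set α} {e e' : ℝ}

lemma dist_le_of_dist_gap (he : 0 ≤ e) (hee' : 2 * e ≤ e')
    (hgap : ∀ x ∈ X, ∀ y ∈ X, x ≠ y → dist x y ∉ Ioc e e') {x y z : α}
    (hx : x ∈ X) (hz : z ∈ X) (hxy : dist x y ≤ e) (hyz : dist y z ≤ e) : dist x z ≤ e := by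
  rcases eq_or_ne x z with rfl | hxz
  · simpa using he
  by_contra! h
  exact hgap x hx z hz hxz ⟨h, by linarith [dist_triangle x y z]⟩

lemma inter_closedBall_eq_of_dist_gap (he : 0 ≤ e) (hee' : 2 * e ≤ e')
    (hgap : ∀ x ∈ X, ∀ y ∈ X, x ≠ y → dist x y ∉ Ioc e e') {x y : α}
    (hx : x ∈ X) (hy : y ∈ X) (hxy : dist x y ≤ e) :
    X ∩ closedBall x e = X ∩ closedBall y e := by
  ext z
  simp only [mem_inter_iff, mem_closedBall, and_congr_right_iff]
  intro hz
  exact ⟨fun h => dist_le_of_dist_gap he hee' hgap hz hy h hxy,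
    fun h => dist_le_of_dist_gap he hee' hgap hz hx h (dist_comm x y ▸ hxy)⟩

lemma exists_partition_of_dist_gap (hX : X.Finite) (he : 0 ≤ e) (hee' : 2 * e ≤ e')
    (hgap : ∀ x ∈ X, ∀ y ∈ X, x ≠ y → dist x y ∉ Ioc e e') :
    ∃ (m : ℕ) (P : Fin m → Set α),
      (∀ j, (P j).Nonempty) ∧ (⋃ j, P j) = X ∧
      (∀ j j', j ≠ j' → Disjoint (P j) (P j')) ∧
      (∀ j, diam (P j) ≤ e) ∧
      (∀ j j', j ≠ j' → ∀ x ∈ P j, ∀ x' ∈ P j', e' ≤ dist x x') := by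
  set C : α → Set α := fun x => X ∩ closedBall x e
  have hC_eq {x y : α} (hx : x ∈ X) (hy : y ∈ X) (hxy : dist x y ≤ e) : C x = C y :=
    inter_closedBall_eq_of_dist_gap he hee' hgap hx hy hxy
  have hC_self {x : α} (hx : x ∈ X) : x ∈ C x := ⟨hx, mem_closedBall_self he⟩
  obtain ⟨m, P, hPinj, hPrange⟩ := (hX.image C).fin_param
  have hP (j : Fin m) : ∃ x ∈ X, P j = C x := by
    obtain ⟨x, hx, hPx⟩ := hPrange ▸ mem_range_self j
    exact ⟨x, hx, hPx.symm⟩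
  have hPX (j : Fin m) : P j ⊆ X := by
    obtain ⟨x, -, hPx⟩ := hP j
    exact hPx ▸ inter_subset_left
  have hP_eq {j j' : Fin m} {u v : α} (hu : u ∈ P j) (hv : v ∈ P j') (huv : dist u v ≤ e) :
      j = j' := by
    obtain ⟨x, hx, hPx⟩ := hP j
    obtain ⟨y, hy, hPy⟩ := hP j'
    rw [hPx] at hu
    rw [hPy] at hv
    refine hPinj ?_
    calc P j = C x := hPx
      _ = C u := hC_eq hx hu.1 (dist_comm u x ▸ hu.2)
      _ = C v := hC_eq hu.1 hv.1 huv
      _ = C y := hC_eq hv.1 hy hv.2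
      _ = P j' := hPy.symm
  refine ⟨m, P, fun j => ?_, ?_, fun j j' hjj' => ?_, fun j => ?_, fun j j' hjj' u hu v hv => ?_⟩
  · obtain ⟨x, hx, hPx⟩ := hP j
    exact ⟨x, hPx ▸ hC_self hx⟩
  · refine (iUnion_subset hPX).antisymm fun x hx => ?_
    obtain ⟨j, hj⟩ : C x ∈ range P := hPrange ▸ mem_image_of_mem C hx
    exact mem_iUnion.2 ⟨j, hj ▸ hC_self hx⟩
  · exact Set.disjoint_left.2 fun u hu hu' => hjj' (hP_eq hu hu' (by simpa using he))
  · obtain ⟨x, hx, hPx⟩ := hP j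
    refine diam_le_of_forall_dist_le he fun u hu v hv => ?_
    rw [hPx] at hu hv
    exact dist_le_of_dist_gap he hee' hgap hu.1 hv.1 hu.2 (dist_comm v x ▸ hv.2)
  · by_contra! h
    refine hjj' (hP_eq hu hv ?_)
    by_contra! h'
    rcases eq_or_ne u v with rfl | huv
    · exact (dist_self u ▸ h').not_ge he
    · exact hgap u (hPX j hu) v (hPX j' hv) huv ⟨h', h.le⟩

end GapClusters

theorem stmt_1_general {D k : ℕ} (η : ℝ) (hη0 : 0 < η) (hη1 : η ≤ 1 / 10)
    (X : Set (EuclideanSpace ℝ (Fin D))) (hX : X.Finite)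
    (hcard : hX.toFinset.card = k) :
    ∃ l : ℕ, 10 ≤ l ∧ l ≤ 100 + k * (k - 1) / 2 ∧
      ∃ (m : ℕ) (P : Fin m → Set (EuclideanSpace ℝ (Fin D))),
        (∀ j, (P j).Nonempty) ∧ (⋃ j, P j) = X ∧
        (∀ j j', j ≠ j' → Disjoint (P j) (P j')) ∧
        (∀ j, Metric.diam (P j) ≤ η ^ l * Metric.diam X) ∧
        (∀ j j', j ≠ j' → ∀ x ∈ P j, ∀ x' ∈ P j',
          η ^ (l - 1) * Metric.diam X ≤ dist x x') := by
  obtain ⟨S, hSk, hS⟩ := hX.toFinset.exists_dist_finset_card_le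
  rw [hcard, Nat.choose_two_right] at hSk
  have hd : 0 ≤ diam X := diam_nonneg
  obtain ⟨l, hl, hgap⟩ := exists_gap_pow_mul S hη0.le (by linarith) hd
    (a := 10) (b := 100 + k * (k - 1) / 2) (by omega)
  rw [Finset.mem_Icc] at hl
  refine ⟨l, hl.1, hl.2, exists_partition_of_dist_gap hX (by positivity)
    (two_mul_pow_mul_le hη0.le (by linarith) hd (by omega)) fun x hx y hy hxy => ?_⟩
  exact hgap _ (hS x (by simpa using hx) y (by simpa using hy) hxy)

/-- Hierarchical clustering: a set of `k ≥ 2` distinct points in `ℝ^D` can be partitioned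
into nonempty clusters with small diameters and large mutual distances, controlled by
`η^l` and `η^(l-1)` for some `10 ≤ l ≤ 100 + k(k-1)/2`. -/
theorem stmt_1 {D k : ℕ} (hk : 2 ≤ k) (η : ℝ) (hη0 : 0 < η) (hη1 : η ≤ 1 / 10)
    (X : Set (EuclideanSpace ℝ (Fin D))) (hX : X.Finite)
    (hcard : hX.toFinset.card = k) :
    ∃ l : ℕ, 10 ≤ l ∧ l ≤ 100 + k * (k - 1) / 2 ∧
      ∃ (m : ℕ) (P : Fin m → Set (EuclideanSpace ℝ (Fin D))),
        (∀ j, (P j).Nonempty) ∧ (⋃ j, P j) = X ∧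
        (∀ j j', j ≠ j' → Disjoint (P j) (P j')) ∧
        (∀ j, Metric.diam (P j) ≤ η ^ l * Metric.diam X) ∧
        (∀ j j', j ≠ j' → ∀ x ∈ P j, ∀ x' ∈ P j',
          η ^ (l - 1) * Metric.diam X ≤ dist x x') :=
  stmt_1_general η hη0 hη1 X hX hcard
end

section
/- Let ε > 0. Then there exists δ > 0 depending only on ε, k, and D such that the following holds: if y_1,...,y_k and z_1,...,z_k are points in ℝ^D with y_1 = z_1 = 0, diam{y_1,...,y_k} = 1, and (1+δ)^{-1} ≤ |z_i - z_j|/|y_i - y_j| ≤ (1+δ) for all i ≠ j (with y_i pairwise distinct), then there exists a Euclidean motion A : ℝ^D → ℝ^D with |A(y_i) - z_i| ≤ ε for each i. -/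
/-!
Suppose the statement fails. Then for every `n` there are configurations `yₙ`, `zₙ` whose
distance ratios lie within `1 + 1/(n+1)` of `1` but which no Euclidean motion matches up to `ε`.
They are bounded, so a subsequence converges to configurations `Y`, `Z` with equal pairwise
distances and `Y₁ = Z₁ = 0`. Equal distances to the origin and to each other give equal Gram
matrices, so some linear isometry carries `Y` to `Z`; it matches `yₙ` to `zₙ` up to `ε` for
large `n`, a contradiction.
-/

open Metric Filter Topology Matrix

section

variable {𝕜 E ι : Type*} [RCLike 𝕜] [NormedAddCommGroup E] [InnerProductSpace 𝕜 E] [Fintype ι]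

theorem norm_linearCombination_eq_of_gram_eq {v w : ι → E} (h : gram 𝕜 v = gram 𝕜 w)
    (c : ι → 𝕜) :
    ‖Fintype.linearCombination 𝕜 w c‖ = ‖Fintype.linearCombination 𝕜 v c‖ := by
  have hinner := congrArg (star c ⬝ᵥ · *ᵥ c) h
  simp only [star_dotProduct_gram_mulVec] at hinner
  simp only [Fintype.linearCombination_apply, @norm_eq_sqrt_re_inner 𝕜, hinner]

theorem exists_linearIsometryEquiv_of_gram_eq [FiniteDimensional 𝕜 E] {v w : ι → E}
    (h : gram 𝕜 v = gram 𝕜 w) : ∃ M : E ≃ₗᵢ[𝕜] E, ∀ i, M (v i) = w i := by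
  -- `c ↦ ∑ cᵢ wᵢ` has the same norms as `c ↦ ∑ cᵢ vᵢ`, so it factors isometrically through
  -- the range of the latter, and that partial isometry extends to all of `E`.
  set T := Fintype.linearCombination 𝕜 v
  set U := Fintype.linearCombination 𝕜 w
  have hker : LinearMap.ker T ≤ LinearMap.ker U := fun c hc ↦ by
    rw [LinearMap.mem_ker, ← norm_eq_zero, norm_linearCombination_eq_of_gram_eq h,
      norm_eq_zero, ← LinearMap.mem_ker]
    exact hc
  let φ : LinearMap.range T →ₗ[𝕜] E :=
    (LinearMap.ker T).liftQ U hker ∘ₗ T.quotKerEquivRange.symm.toLinearMap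
  have hφ (c : ι → 𝕜) : φ ⟨T c, LinearMap.mem_range_self T c⟩ = U c := by
    simp [φ, T.quotKerEquivRange_symm_apply_image]
  let ψ : LinearMap.range T →ₗᵢ[𝕜] E := ⟨φ, by
    rintro ⟨_, c, rfl⟩
    rw [hφ]
    exact norm_linearCombination_eq_of_gram_eq h c⟩
  refine ⟨ψ.extend.toLinearIsometryEquiv rfl, fun i ↦ ?_⟩
  classical
  have hT : T (Pi.single i 1) = v i := by simp [T]
  rw [LinearIsometry.toLinearIsometryEquiv_apply, ← hT,
    ψ.extend_apply ⟨_, LinearMap.mem_range_self T _⟩]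
  exact (hφ _).trans (by simp [U])

end

section

variable {F ι : Type*} [NormedAddCommGroup F] [InnerProductSpace ℝ F]

theorem gram_eq_of_dist_eq {v w : ι → F} {i₀ : ι} (hv : v i₀ = 0) (hw : w i₀ = 0)
    (h : ∀ i j, dist (v i) (v j) = dist (w i) (w j)) : gram ℝ v = gram ℝ w := by
  have hnorm (i : ι) : ‖v i‖ = ‖w i‖ := by simpa [hv, hw] using h i i₀
  ext i j
  simp only [gram_apply, ← dist_eq_norm, h, hnorm,
    real_inner_eq_norm_mul_self_add_norm_mul_self_sub_norm_sub_mul_self_div_two]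

theorem exists_linearIsometryEquiv_dist_lt_of_tendsto [FiniteDimensional ℝ F] [Fintype ι]
    {y z : ℕ → ι → F} {i₀ : ι} (hy₀ : ∀ n, y n i₀ = 0) (hz₀ : ∀ n, z n i₀ = 0)
    (hy : Bornology.IsBounded (Set.range y)) (hz : Bornology.IsBounded (Set.range z))
    (h : ∀ i j, Tendsto (fun n ↦ dist (z n i) (z n j) - dist (y n i) (y n j)) atTop (𝓝 0))
    {ε : ℝ} (hε : 0 < ε) : ∃ n, ∃ M : F ≃ₗᵢ[ℝ] F, ∀ i, dist (M (y n i)) (z n i) < ε := by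
  obtain ⟨⟨Y, Z⟩, -, φ, hφ, hlim⟩ := tendsto_subseq_of_bounded (hy.prod hz)
    (x := fun n ↦ (y n, z n)) fun n ↦ ⟨Set.mem_range_self n, Set.mem_range_self n⟩
  have hY (i : ι) : Tendsto (fun n ↦ y (φ n) i) atTop (𝓝 (Y i)) :=
    tendsto_pi_nhds.1 (hlim.fst_nhds) i
  have hZ (i : ι) : Tendsto (fun n ↦ z (φ n) i) atTop (𝓝 (Z i)) :=
    tendsto_pi_nhds.1 (hlim.snd_nhds) i
  have hdist (i j : ι) : dist (Y i) (Y j) = dist (Z i) (Z j) :=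
    (sub_eq_zero.1 <| tendsto_nhds_unique (((hZ i).dist (hZ j)).sub ((hY i).dist (hY j)))
      ((h i j).comp hφ.tendsto_atTop)).symm
  have hY₀ : Y i₀ = 0 := tendsto_nhds_unique (hY i₀) (by simp [hy₀])
  have hZ₀ : Z i₀ = 0 := tendsto_nhds_unique (hZ i₀) (by simp [hz₀])
  obtain ⟨M, hM⟩ := exists_linearIsometryEquiv_of_gram_eq (gram_eq_of_dist_eq hY₀ hZ₀ hdist)
  have hclose (i : ι) : ∀ᶠ n in atTop, dist (M (y (φ n) i)) (z (φ n) i) < ε := by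
    have := ((M.continuous.tendsto _).comp (hY i)).dist (hZ i)
    rw [hM, dist_self] at this
    exact this.eventually (gt_mem_nhds hε)
  obtain ⟨n, hn⟩ := (eventually_all.2 hclose).exists
  exact ⟨φ n, M, hn⟩

end

theorem abs_sub_le_mul_of_inv_le_div_of_div_le {a b δ : ℝ} (hb : 0 < b) (hδ : 0 ≤ δ)
    (hlo : (1 + δ)⁻¹ ≤ a / b) (hhi : a / b ≤ 1 + δ) : |a - b| ≤ δ * b := by
  rw [inv_le_iff_one_le_mul₀ (by linarith), div_mul_eq_mul_div, le_div_iff₀ hb] at hlo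
  rw [div_le_iff₀ hb] at hhi
  rw [abs_le]
  constructor <;> nlinarith

theorem isBounded_range_of_forall_norm_apply_le {α ι F : Type*} [Fintype ι]
    [SeminormedAddCommGroup F] {x : α → ι → F} {R : ℝ} (h : ∀ a i, ‖x a i‖ ≤ R) :
    Bornology.IsBounded (Set.range x) := by
  refine isBounded_iff_forall_norm_le.2 ⟨max R 0, ?_⟩
  rintro _ ⟨a, rfl⟩
  exact (pi_norm_le_iff_of_nonneg (le_max_right _ _)).2 fun i ↦ (h a i).trans (le_max_left _ _)

theorem abs_dist_sub_dist_le_of_ratio_bounds {X ι : Type*} [MetricSpace X] [Finite ι]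
    {y z : ι → X} (hy : Function.Injective y) (hdiam : diam (Set.range y) ≤ 1) {δ : ℝ}
    (hδ : 0 ≤ δ) (hratio : ∀ i j, i ≠ j →
      (1 + δ)⁻¹ ≤ dist (z i) (z j) / dist (y i) (y j) ∧
        dist (z i) (z j) / dist (y i) (y j) ≤ 1 + δ) (i j : ι) :
    |dist (z i) (z j) - dist (y i) (y j)| ≤ δ := by
  rcases eq_or_ne i j with rfl | hij
  · simpa using hδ
  obtain ⟨hlo, hhi⟩ := hratio i j hij
  calc _ ≤ δ * dist (y i) (y j) :=
        abs_sub_le_mul_of_inv_le_div_of_div_le (dist_pos.2 (hy.ne hij)) hδ hlo hhi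
    _ ≤ δ := mul_le_of_le_one_right hδ <| (dist_le_diam_of_mem (Set.finite_range y).isBounded
        (Set.mem_range_self i) (Set.mem_range_self j)).trans hdiam

/-- For every `ε > 0` there is `δ > 0` (depending on `ε`, `k`, `D`) such that any two
configurations with `y_1 = z_1 = 0`, `diam{y_i} = 1` and pairwise distance ratios in
`[(1+δ)⁻¹, 1+δ]` are matched up to error `ε` by a Euclidean motion `x ↦ Mx + b`. -/
theorem stmt_3 {D k : ℕ} (hk : 1 ≤ k) (ε : ℝ) (hε : 0 < ε) :
    ∃ δ > (0 : ℝ), ∀ y z : Fin k → EuclideanSpace ℝ (Fin D),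
      Function.Injective y →
      y ⟨0, hk⟩ = 0 → z ⟨0, hk⟩ = 0 →
      Metric.diam (Set.range y) = 1 →
      (∀ i j, i ≠ j →
        (1 + δ)⁻¹ ≤ dist (z i) (z j) / dist (y i) (y j) ∧
          dist (z i) (z j) / dist (y i) (y j) ≤ 1 + δ) →
      ∃ (M : EuclideanSpace ℝ (Fin D) ≃ₗᵢ[ℝ] EuclideanSpace ℝ (Fin D))
        (b : EuclideanSpace ℝ (Fin D)),
        ∀ i, dist (M (y i) + b) (z i) ≤ ε := by
  set i₀ : Fin k := ⟨0, hk⟩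
  by_contra! hcon
  choose y z hinj hy₀ hz₀ hdiam hratio hfar using
    fun n : ℕ ↦ hcon (1 / (n + 1)) (by positivity)
  have hy (n : ℕ) (i : Fin k) : ‖y n i‖ ≤ 1 := by
    have h := dist_le_diam_of_mem (Set.finite_range (y n)).isBounded
      (Set.mem_range_self i) (Set.mem_range_self i₀)
    rwa [hdiam n, hy₀, dist_zero_right] at h
  have hyz (n : ℕ) := abs_dist_sub_dist_le_of_ratio_bounds (hinj n) (hdiam n).le
    (by positivity) (hratio n)
  have hz (n : ℕ) (i : Fin k) : ‖z n i‖ ≤ 2 := by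
    have h := (abs_le.1 (hyz n i i₀)).2
    simp only [hy₀, hz₀, dist_zero_right] at h
    have hδ : 1 / ((n : ℝ) + 1) ≤ 1 :=
      div_le_one_of_le₀ (le_add_of_nonneg_left n.cast_nonneg) (by positivity)
    linarith [hy n i]
  obtain ⟨n, M, hM⟩ := exists_linearIsometryEquiv_dist_lt_of_tendsto hy₀ hz₀
    (isBounded_range_of_forall_norm_apply_le hy) (isBounded_range_of_forall_norm_apply_le hz)
    (fun i j ↦ squeeze_zero_norm (hyz · i j) tendsto_one_div_add_atTop_nhds_zero_nat) hε
  obtain ⟨i, hi⟩ := hfar n M 0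
  exact (hM i).not_ge (by simpa using hi.le)
end

section
/- Let S ⊂ ℝ^D be a finite set with diam(S) = 1 and suppose that the maximal D-dimensional volume V_D(S) of a D-simplex with vertices in S satisfies V_D(S) ≤ η^D for some 0 < η < 1. Then there exists an affine hyperplane H ⊂ ℝ^D such that dist(x, H) ≤ Cη for all x ∈ S, where C depends only on D. Consequently, the reflection A through H is an improper Euclidean motion satisfying |A(x) - x| ≤ 2Cη for all x ∈ S. -/
/-- The `D`-dimensional volume of the simplex with vertices `z 0, ..., z D` in `ℝ^D`. -/
noncomputable def simplexVol (D : ℕ) (z : Fin (D + 1) → EuclideanSpace ℝ (Fin D)) : ℝ :=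
  |(Matrix.of fun i j : Fin D => (z i.succ - z 0) j).det| / (Nat.factorial D)

/-!
Fix `p ∈ S` and choose vectors `u₀, …, u_{D-1}` of the form `x - p` (`x ∈ S`) greedily, each as
far as possible from the span of the previous ones. The Gram–Schmidt residuals `rᵢ` of this
family then decrease, and their product is `|det(u₀, …, u_{D-1})| = D! · vol(p, p + u₀, …)`,
at most `D! η^D`. Hence `r_{D-1} ≤ D! η`, and by the greedy choice every point of `S` lies
within `r_{D-1}` of the hyperplane through `p` spanned by `u₀, …, u_{D-2}`.
-/

open InnerProductSpace Submodule Module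

variable {E : Type*} [NormedAddCommGroup E] [InnerProductSpace ℝ E]

section GramSchmidt

variable {ι : Type*} [LinearOrder ι] [LocallyFiniteOrderBot ι] [WellFoundedLT ι]

theorem gramSchmidt_eq_sub_starProjection (f : ι → E) (n : ι)
    [(span ℝ (f '' Set.Iio n)).HasOrthogonalProjection] :
    gramSchmidt ℝ f n = f n - (span ℝ (f '' Set.Iio n)).starProjection (f n) := by
  have hmem : f n - gramSchmidt ℝ f n ∈ span ℝ (f '' Set.Iio n) := by
    rw [← span_gramSchmidt_Iio, gramSchmidt_def, sub_sub_cancel]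
    refine sum_mem fun i hi => ?_
    rw [starProjection_singleton]
    exact smul_mem _ _ (subset_span ⟨i, Finset.mem_Iio.1 hi, rfl⟩)
  have hle : span ℝ (f '' Set.Iio n) ≤ (ℝ ∙ gramSchmidt ℝ f n)ᗮ := by
    rw [span_le]
    rintro _ ⟨i, hi, rfl⟩
    exact mem_orthogonal_singleton_iff_inner_right.2 (gramSchmidt_inv_triangular ℝ f hi)
  have horth : gramSchmidt ℝ f n ∈ (span ℝ (f '' Set.Iio n))ᗮ :=
    (mem_orthogonal' _ _).2 fun w hw => mem_orthogonal_singleton_iff_inner_right.1 (hle hw)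
  rw [eq_starProjection_of_mem_orthogonal' hmem horth (sub_add_cancel _ _).symm, sub_sub_cancel]

theorem inner_gramSchmidt_self_apply (f : ι → E) (n : ι) :
    inner ℝ (gramSchmidt ℝ f n) (f n) = ‖gramSchmidt ℝ f n‖ ^ 2 := by
  rw [gramSchmidt_def' ℝ f n, inner_add_right, real_inner_self_eq_norm_sq, add_eq_left, inner_sum]
  refine Finset.sum_eq_zero fun i hi => ?_
  rw [starProjection_singleton, inner_smul_right,
    gramSchmidt_orthogonal ℝ f (Finset.mem_Iio.1 hi).ne', mul_zero]

theorem abs_inner_gramSchmidtNormed_self_apply (f : ι → E) (n : ι) :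
    |inner ℝ (gramSchmidtNormed ℝ f n) (f n)| = ‖gramSchmidt ℝ f n‖ := by
  rcases eq_or_ne (gramSchmidt ℝ f n) 0 with h | h
  · simp [gramSchmidtNormed, h]
  · rw [gramSchmidtNormed, RCLike.ofReal_real_eq_id, id, real_inner_smul_left,
      inner_gramSchmidt_self_apply, abs_of_nonneg (by positivity)]
    field_simp

theorem OrthonormalBasis.abs_det_eq_prod_norm_gramSchmidt [Fintype ι] [FiniteDimensional ℝ E]
    (b : OrthonormalBasis ι ℝ E) (f : ι → E) :
    |b.toBasis.det f| = ∏ i, ‖gramSchmidt ℝ f i‖ := by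
  classical
  have hcard : finrank ℝ E = Fintype.card ι := finrank_eq_card_basis b.toBasis
  set c := gramSchmidtOrthonormalBasis hcard f
  have hbc : |b.toBasis.det f| = |c.toBasis.det f| := by
    rw [AlternatingMap.eq_smul_basis_det c.toBasis b.toBasis.det, AlternatingMap.smul_apply,
      smul_eq_mul, abs_mul]
    rcases b.det_to_matrix_orthonormalBasis_real c with h | h <;> simp [h]
  rw [hbc, gramSchmidtOrthonormalBasis_det, Finset.abs_prod]
  refine Finset.prod_congr rfl fun i _ => ?_
  rw [← abs_inner_gramSchmidtNormed_self_apply]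
  by_cases hi : gramSchmidtNormed ℝ f i = 0
  · rw [inner_gramSchmidtOrthonormalBasis_eq_zero hcard hi, hi, inner_zero_left]
  · rw [gramSchmidtOrthonormalBasis_apply hcard hi]

end GramSchmidt

theorem Submodule.norm_sub_starProjection_le (K : Submodule ℝ E) [K.HasOrthogonalProjection]
    (y : E) {z : E} (hz : z ∈ K) :
    ‖y - K.starProjection y‖ ≤ ‖y - z‖ := by
  rw [starProjection_minimal]
  exact ciInf_le ⟨0, Set.forall_mem_range.2 fun _ => norm_nonneg _⟩ (⟨z, hz⟩ : K)

theorem Submodule.norm_sub_starProjection_antitone {K K' : Submodule ℝ E}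
    [K.HasOrthogonalProjection] [K'.HasOrthogonalProjection] (h : K ≤ K') (y : E) :
    ‖y - K'.starProjection y‖ ≤ ‖y - K.starProjection y‖ :=
  K'.norm_sub_starProjection_le y (h (K.starProjection_apply_mem y))

theorem Submodule.exists_norm_eq_one_mem_orthogonal [FiniteDimensional ℝ E] (K : Submodule ℝ E)
    (hK : finrank ℝ K < finrank ℝ E) : ∃ v ∈ Kᗮ, ‖v‖ = 1 := by
  have hne : Kᗮ ≠ ⊥ := by
    intro h
    rw [orthogonal_eq_bot_iff] at h
    rw [h, finrank_top] at hK
    exact hK.false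
  obtain ⟨v, hv, hv0⟩ := exists_mem_ne_zero_of_ne_bot hne
  exact ⟨‖v‖⁻¹ • v, smul_mem _ _ hv, norm_smul_inv_norm hv0⟩

section Greedy

variable [FiniteDimensional ℝ E]

noncomputable def farthestPoint (T : Set E) (K : Submodule ℝ E) : E :=
  Classical.epsilon fun x => x ∈ T ∧ ∀ y ∈ T, ‖y - K.starProjection y‖ ≤ ‖x - K.starProjection x‖

theorem farthestPoint_spec {T : Set E} (hT : T.Finite) (hne : T.Nonempty) (K : Submodule ℝ E) :
    farthestPoint T K ∈ T ∧ ∀ y ∈ T,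
      ‖y - K.starProjection y‖ ≤ ‖farthestPoint T K - K.starProjection (farthestPoint T K)‖ :=
  Classical.epsilon_spec (Set.exists_max_image T _ hT hne)

variable {ι : Type*} [LinearOrder ι] [WellFoundedLT ι]

noncomputable def greedyFamily (T : Set E) : ι → E :=
  wellFounded_lt.fix fun n g => farthestPoint T (span ℝ (Set.range fun i : Set.Iio n => g i i.2))

theorem greedyFamily_apply (T : Set E) (n : ι) :
    greedyFamily T n = farthestPoint T (span ℝ (greedyFamily T '' Set.Iio n)) := by
  rw [greedyFamily, WellFounded.fix_eq, Set.image_eq_range]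

variable {T : Set E} (hT : T.Finite) (hne : T.Nonempty)
include hT hne

theorem greedyFamily_mem (n : ι) : greedyFamily T n ∈ T := by
  rw [greedyFamily_apply]
  exact (farthestPoint_spec hT hne _).1

variable [LocallyFiniteOrderBot ι]

theorem norm_sub_starProjection_le_norm_gramSchmidt_greedyFamily (n : ι) {y : E} (hy : y ∈ T) :
    ‖y - (span ℝ (greedyFamily T '' Set.Iio n)).starProjection y‖ ≤
      ‖gramSchmidt ℝ (greedyFamily T) n‖ := by
  have := (farthestPoint_spec hT hne (span ℝ (greedyFamily T '' Set.Iio n))).2 y hy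
  rwa [← greedyFamily_apply, ← gramSchmidt_eq_sub_starProjection] at this

theorem antitone_norm_gramSchmidt_greedyFamily :
    Antitone fun n : ι => ‖gramSchmidt ℝ (greedyFamily T) n‖ := by
  intro i j hij
  dsimp only
  rw [gramSchmidt_eq_sub_starProjection]
  refine (norm_sub_starProjection_antitone (span_mono (Set.image_mono (Set.Iio_subset_Iio hij)))
    _).trans ?_
  exact norm_sub_starProjection_le_norm_gramSchmidt_greedyFamily hT hne i
    (greedyFamily_mem hT hne j)

end Greedy

theorem OrthonormalBasis.exists_norm_eq_one_abs_inner_le_of_abs_det_le [FiniteDimensional ℝ E]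
    {n : ℕ} (b : OrthonormalBasis (Fin (n + 1)) ℝ E) {T : Set E} (hT : T.Finite) {ε : ℝ}
    (hε : 0 ≤ ε) (hdet : ∀ u : Fin (n + 1) → E, (∀ i, u i ∈ T) → |b.toBasis.det u| ≤ ε ^ (n + 1)) :
    ∃ v : E, ‖v‖ = 1 ∧ ∀ y ∈ T, |inner ℝ v y| ≤ ε := by
  rcases T.eq_empty_or_nonempty with rfl | hne
  · exact ⟨b 0, b.orthonormal.1 0, by simp⟩
  set u : Fin (n + 1) → E := greedyFamily T
  set K := span ℝ (u '' Set.Iio (Fin.last n))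
  have hlast : ‖gramSchmidt ℝ u (Fin.last n)‖ ≤ ε := by
    refine le_of_pow_le_pow_left₀ n.succ_ne_zero hε ?_
    calc ‖gramSchmidt ℝ u (Fin.last n)‖ ^ (n + 1)
        = ∏ _i : Fin (n + 1), ‖gramSchmidt ℝ u (Fin.last n)‖ := by simp
      _ ≤ ∏ i, ‖gramSchmidt ℝ u i‖ := Finset.prod_le_prod (fun _ _ => norm_nonneg _)
          fun i _ => antitone_norm_gramSchmidt_greedyFamily hT hne (Fin.le_last i)
      _ = |b.toBasis.det u| := (b.abs_det_eq_prod_norm_gramSchmidt u).symm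
      _ ≤ ε ^ (n + 1) := hdet u (greedyFamily_mem hT hne)
  have hK : finrank ℝ K < finrank ℝ E := by
    calc finrank ℝ K ≤ Fintype.card (Set.Iio (Fin.last n)) := by
          rw [show K = _ from congrArg (span ℝ) (Set.image_eq_range u _)]
          exact finrank_range_le_card _
      _ = n := by rw [← Set.toFinset_card, Set.toFinset_Iio, Fin.card_Iio]; simp
      _ < finrank ℝ E := by rw [finrank_eq_card_basis b.toBasis, Fintype.card_fin]; omega
  obtain ⟨v, hvK, hv⟩ := K.exists_norm_eq_one_mem_orthogonal hK
  refine ⟨v, hv, fun y hy => ?_⟩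
  have hproj : inner ℝ v (K.starProjection y) = 0 :=
    inner_left_of_mem_orthogonal (K.starProjection_apply_mem y) hvK
  calc |inner ℝ v y| = |inner ℝ v (y - K.starProjection y)| := by
        rw [inner_sub_right, hproj, sub_zero]
    _ ≤ ‖y - K.starProjection y‖ := by
        simpa [hv] using abs_real_inner_le_norm v (y - K.starProjection y)
    _ ≤ ‖gramSchmidt ℝ u (Fin.last n)‖ :=
        norm_sub_starProjection_le_norm_gramSchmidt_greedyFamily hT hne _ hy
    _ ≤ ε := hlast

theorem infDist_le_abs_inner_sub {v : E} (hv : ‖v‖ = 1) (x : E) (a : ℝ) :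
    Metric.infDist x {y | inner ℝ v y = a} ≤ |inner ℝ v x - a| := by
  have hmem : x - (inner ℝ v x - a) • v ∈ {y | inner ℝ v y = a} := by
    simp [inner_sub_right, real_inner_smul_right, hv]
  calc Metric.infDist x {y | inner ℝ v y = a} ≤ dist x (x - (inner ℝ v x - a) • v) :=
        Metric.infDist_le_dist_of_mem hmem
    _ = |inner ℝ v x - a| := by rw [dist_eq_norm, sub_sub_cancel, norm_smul, hv, mul_one,
        Real.norm_eq_abs]

theorem norm_sub_smul_sub_self {v : E} (hv : ‖v‖ = 1) (x : E) (a : ℝ) :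
    ‖(x - (2 * (inner ℝ v x - a)) • v) - x‖ = 2 * |inner ℝ v x - a| := by
  rw [sub_sub_cancel_left, norm_neg, norm_smul, hv, mul_one, Real.norm_eq_abs, abs_mul,
    abs_two]

theorem simplexVol_cons_add {D : ℕ} (p : EuclideanSpace ℝ (Fin D))
    (u : Fin D → EuclideanSpace ℝ (Fin D)) :
    simplexVol D (Fin.cons p fun i => u i + p) =
      |(EuclideanSpace.basisFun (Fin D) ℝ).toBasis.det u| / D.factorial := by
  rw [Basis.det_apply, ← Matrix.det_transpose]
  simp only [simplexVol, Fin.cons_succ, Fin.cons_zero, add_sub_cancel_right]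
  rfl

/-- If a finite set `S ⊆ ℝ^D` of diameter 1 has all `D`-simplex volumes `≤ η^D`, then
`S` lies within distance `Cη` of an affine hyperplane `{x | ⟪v,x⟫ = a}`, and the
reflection through that hyperplane moves each point of `S` by at most `2Cη`. -/
theorem stmt_6 (D : ℕ) (hD : 1 ≤ D) :
    ∃ C > (0 : ℝ), ∀ (S : Set (EuclideanSpace ℝ (Fin D))) (η : ℝ),
      S.Finite → Metric.diam S = 1 → 0 < η → η < 1 →
      (∀ z : Fin (D + 1) → EuclideanSpace ℝ (Fin D),
        (∀ i, z i ∈ S) → simplexVol D z ≤ η ^ D) →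
      ∃ (v : EuclideanSpace ℝ (Fin D)) (a : ℝ), ‖v‖ = 1 ∧
        (∀ x ∈ S, Metric.infDist x {y | (inner ℝ v y : ℝ) = a} ≤ C * η) ∧
        (∀ x ∈ S, ‖(x - (2 * ((inner ℝ v x : ℝ) - a)) • v) - x‖ ≤ 2 * C * η) := by
  obtain ⟨n, rfl⟩ := Nat.exists_eq_add_one.2 hD
  refine ⟨(n + 1).factorial, by positivity, fun S η hS hdiam hη _ hvol => ?_⟩
  obtain ⟨p, hp⟩ : S.Nonempty := Set.nonempty_iff_ne_empty.2 (by rintro rfl; simp at hdiam)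
  have hdet : ∀ u, (∀ i, u i ∈ (· - p) '' S) →
      |(EuclideanSpace.basisFun (Fin (n + 1)) ℝ).toBasis.det u|
        ≤ ((n + 1).factorial * η) ^ (n + 1) := by
    intro u hu
    have hz : ∀ i, (Fin.cons p fun i => u i + p : Fin (n + 2) → _) i ∈ S := by
      refine Fin.cases hp fun i => ?_
      obtain ⟨x, hx, hxu⟩ := hu i
      simpa [← hxu] using hx
    have := hvol _ hz
    rw [simplexVol_cons_add, div_le_iff₀ (by positivity)] at this
    calc _ ≤ η ^ (n + 1) * (n + 1).factorial := this
      _ ≤ η ^ (n + 1) * (n + 1).factorial ^ (n + 1) := by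
          gcongr; exact le_self_pow₀ (by exact_mod_cast (n + 1).factorial_pos) n.succ_ne_zero
      _ = _ := by ring
  obtain ⟨v, hv, hflat⟩ := (EuclideanSpace.basisFun (Fin (n + 1)) ℝ)
    |>.exists_norm_eq_one_abs_inner_le_of_abs_det_le (hS.image _) (by positivity) hdet
  have hS' : ∀ x ∈ S, |inner ℝ v x - inner ℝ v p| ≤ (n + 1).factorial * η := fun x hx => by
    simpa [inner_sub_right] using hflat _ ⟨x, hx, rfl⟩
  refine ⟨v, inner ℝ v p, hv, fun x hx => (infDist_le_abs_inner_sub hv x _).trans (hS' x hx),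
    fun x hx => ?_⟩
  rw [norm_sub_smul_sub_self hv, mul_assoc]
  gcongr
  exact hS' x hx
end

section
/- Let Ψ : ℝ^n → ℝ^n be a C¹ map such that det(DΨ(x)) ≠ 0 for every x ∈ ℝ^n, and suppose Ψ(x) = x for all x with |x| ≥ 1. Then Ψ : ℝ^n → ℝ^n is a bijection. -/
/-!
The inverse function theorem makes `Ψ` a local homeomorphism, so its range is open. The range
is also closed, being the union of the compact image of the unit ball with the closure of the
complement of the ball, on which `Ψ` is the identity; hence `Ψ` is onto. For injectivity, the
pairs `(a, b)` with `a ≠ b` and `Ψ a = Ψ b` form a closed set (local injectivity keeps them away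
from the diagonal) lying in `L × L` for the compact `L = B ∪ Ψ(B)`, `B` the closed unit ball. Its
first projection is therefore compact, hence closed, and it is open because `Ψ` is an open map. A
clopen proper subset of the connected space `ℝ^n` is empty.
-/

open Set Function Metric

section EqSelfOffCompact

variable {X : Type*} {f : X → X} {K : Set X}

def collisionPairs (f : X → X) : Set (X × X) := {p | f p.1 = f p.2 ∧ p.1 ≠ p.2}

theorem mem_union_image_of_collision (hfix : ∀ x ∉ K, f x = x) {a b : X} (hab : f a = f b)
    (hne : a ≠ b) : a ∈ K ∪ f '' K := by
  by_contra hL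
  simp only [mem_union, not_or] at hL
  have ha : f a = a := hfix a hL.1
  by_cases hb : b ∈ K
  · exact hL.2 ⟨b, hb, by rw [← hab, ha]⟩
  · exact hne (by rw [← ha, hab, hfix b hb])

theorem collisionPairs_subset (hfix : ∀ x ∉ K, f x = x) :
    collisionPairs f ⊆ (K ∪ f '' K) ×ˢ (K ∪ f '' K) :=
  fun _ ⟨hab, hne⟩ ↦
    ⟨mem_union_image_of_collision hfix hab hne, mem_union_image_of_collision hfix hab.symm hne.symm⟩

variable [TopologicalSpace X] [T2Space X]

theorem isClosed_range_of_eq_self_off_compact (hf : Continuous f) (hK : IsCompact K)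
    (hfix : ∀ x ∉ K, f x = x) : IsClosed (range f) := by
  have hclosure : EqOn f id (closure Kᶜ) :=
    EqOn.closure (fun x hx ↦ hfix x hx) hf continuous_id
  have hrange : range f = f '' K ∪ closure Kᶜ := by
    refine Subset.antisymm ?_ (union_subset (image_subset_range f K) fun x hx ↦ ⟨x, hclosure hx⟩)
    rintro _ ⟨x, rfl⟩
    by_cases hx : x ∈ K
    · exact Or.inl (mem_image_of_mem f hx)
    · exact Or.inr (by rw [hfix x hx]; exact subset_closure hx)
  rw [hrange]
  exact (hK.image hf).isClosed.union isClosed_closure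

theorem surjective_of_eq_self_off_compact [ConnectedSpace X] (hf : Continuous f)
    (hopen : IsOpenMap f) (hK : IsCompact K) (hfix : ∀ x ∉ K, f x = x) : Surjective f :=
  range_eq_univ.mp <|
    IsClopen.eq_univ ⟨isClosed_range_of_eq_self_off_compact hf hK hfix, hopen.isOpen_range⟩
      (range_nonempty f)

theorem isClosed_collisionPairs (hf : Continuous f) (hinj : IsLocallyInjective f) :
    IsClosed (collisionPairs f) := by
  choose U hUopen hxU hUinj using hinj
  -- `N` is an open neighbourhood of the diagonal on which `f a = f b` forces `a = b`.
  set N : Set (X × X) := ⋃ x, U x ×ˢ U x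
  have hN : collisionPairs f = {p | f p.1 = f p.2} ∩ Nᶜ := by
    ext ⟨a, b⟩
    simp only [collisionPairs, N, mem_inter_iff, mem_compl_iff, mem_iUnion,
      mem_prod, not_exists, not_and]
    refine ⟨fun ⟨hab, hne⟩ ↦ ⟨hab, fun x ha hb ↦ hne (hUinj x ha hb hab)⟩,
      fun ⟨hab, hN⟩ ↦ ⟨hab, fun h ↦ hN a (hxU a) ((show a = b from h) ▸ hxU a)⟩⟩
  rw [hN]
  exact (isClosed_eq (hf.comp continuous_fst) (hf.comp continuous_snd)).inter
    (isOpen_iUnion fun x ↦ (hUopen x).prod (hUopen x)).isClosed_compl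

theorem isOpen_image_fst_collisionPairs (hf : Continuous f) (hopen : IsOpenMap f) :
    IsOpen (Prod.fst '' collisionPairs f) := by
  refine isOpen_iff_forall_mem_open.mpr ?_
  rintro a ⟨⟨a, b⟩, ⟨hab, hne⟩, rfl⟩
  obtain ⟨U, V, hU, hV, haU, hbV, hUV⟩ := t2_separation hne
  refine ⟨U ∩ f ⁻¹' (f '' V), ?_, hU.inter ((hopen V hV).preimage hf), haU, b, hbV, hab.symm⟩
  rintro a' ⟨ha'U, b', hb'V, hb'⟩
  refine ⟨(a', b'), ⟨hb'.symm, fun h ↦ ?_⟩, rfl⟩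
  exact disjoint_left.mp hUV ha'U ((show a' = b' from h) ▸ hb'V)

theorem injective_of_eq_self_off_compact [ConnectedSpace X] [NoncompactSpace X]
    (hf : IsLocalHomeomorph f) (hK : IsCompact K) (hfix : ∀ x ∉ K, f x = x) : Injective f := by
  have hL : IsCompact (K ∪ f '' K) := hK.union (hK.image hf.continuous)
  have hcompact : IsCompact (Prod.fst '' collisionPairs f) :=
    ((hL.prod hL).of_isClosed_subset (isClosed_collisionPairs hf.continuous hf.isLocallyInjective)
      (collisionPairs_subset hfix)).image continuous_fst
  have hsub : Prod.fst '' collisionPairs f ⊆ K ∪ f '' K :=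
    (image_mono (collisionPairs_subset hfix)).trans (fst_image_prod_subset _ _)
  have hclopen : IsClopen (Prod.fst '' collisionPairs f) :=
    ⟨hcompact.isClosed, isOpen_image_fst_collisionPairs hf.continuous hf.isOpenMap⟩
  have hempty : Prod.fst '' collisionPairs f = ∅ :=
    (isClopen_iff.mp hclopen).resolve_right fun h ↦ hL.ne_univ (univ_subset_iff.mp (h ▸ hsub))
  intro a b hab
  by_contra hne
  exact hempty.subset ⟨(a, b), ⟨hab, hne⟩, rfl⟩

end EqSelfOffCompact

theorem isLocalHomeomorph_of_det_fderiv_ne_zero {𝕜 E : Type*} [RCLike 𝕜] [NormedAddCommGroup E]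
    [NormedSpace 𝕜 E] [FiniteDimensional 𝕜 E] {f : E → E} (hf : ContDiff 𝕜 1 f)
    (hdet : ∀ x, LinearMap.det (fderiv 𝕜 f x : E →ₗ[𝕜] E) ≠ 0) : IsLocalHomeomorph f := by
  have := FiniteDimensional.complete 𝕜 E
  refine IsLocalHomeomorph.mk f fun x ↦ ?_
  let e : E ≃L[𝕜] E := (LinearMap.equivOfDetNeZero _ (hdet x)).toContinuousLinearEquiv
  have hstrict : HasStrictFDerivAt f (e : E →L[𝕜] E) x :=
    hf.contDiffAt.hasStrictFDerivAt one_ne_zero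
  exact ⟨hstrict.toOpenPartialHomeomorph f, hstrict.mem_toOpenPartialHomeomorph_source,
    fun _ _ ↦ rfl⟩

/-- A `C¹` map `Ψ : ℝ^n → ℝ^n` with everywhere nonvanishing Jacobian determinant which
agrees with the identity outside the unit ball is a bijection. -/
theorem stmt_9 {n : ℕ}
    (Ψ : EuclideanSpace ℝ (Fin n) → EuclideanSpace ℝ (Fin n))
    (hΨ : ContDiff ℝ 1 Ψ)
    (hdet : ∀ x, LinearMap.det
      (fderiv ℝ Ψ x : EuclideanSpace ℝ (Fin n) →ₗ[ℝ] EuclideanSpace ℝ (Fin n)) ≠ 0)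
    (hid : ∀ x, 1 ≤ ‖x‖ → Ψ x = x) :
    Function.Bijective Ψ := by
  have hloc : IsLocalHomeomorph Ψ := isLocalHomeomorph_of_det_fderiv_ne_zero hΨ hdet
  have hball : IsCompact (closedBall (0 : EuclideanSpace ℝ (Fin n)) 1) := isCompact_closedBall 0 1
  have hfix : ∀ x ∉ closedBall 0 1, Ψ x = x := fun x hx ↦
    hid x (not_le.mp (mt mem_closedBall_zero_iff.mpr hx)).le
  refine ⟨?_, surjective_of_eq_self_off_compact hloc.continuous hloc.isOpenMap hball hfix⟩
  rcases subsingleton_or_nontrivial (EuclideanSpace ℝ (Fin n)) with _ | _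
  · exact injective_of_subsingleton Ψ
  · exact injective_of_eq_self_off_compact hloc hball hfix
end

section
/- Let φ : E → ℝ^D be a map on a compact set E with B(z, r) ⊂ E, satisfying (1-ε)|x-y| ≤ |φ(x) - φ(y)| ≤ (1+ε)|x-y| for all x, y ∈ E. Then there exists a Euclidean motion A such that for every K ≥ 1 and every y ∈ B(z, Kr) ∩ E, |φ(y) - A(y)| ≤ C K² ε r, where C depends only on D. -/
/-!
After rescaling we may assume `z = 0`, `r = 1`, `φ 0 = 0`. By polarization, a near isometry fixing
`0` almost preserves inner products, so the images `φ eᵢ` of an orthonormal basis have Gram matrix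
`O(ε)`-close to the identity; Gram–Schmidt moves them by `O(ε)` to an orthonormal basis `wᵢ`, and
`M eᵢ = wᵢ` defines the linear isometry. The coordinates `⟪wᵢ, φ y⟫` and `⟪eᵢ, y⟫ = ⟪wᵢ, M y⟫`
then differ by `O(ε (1 + ‖y‖)²)`, again by polarization. When `ε` is not small, `M = id` works.
-/

open scoped RealInnerProductSpace

theorem abs_sub_one_le_of_abs_sq_sub_one_le {x δ : ℝ} (hx : 0 ≤ x) (h : |x ^ 2 - 1| ≤ δ) :
    |x - 1| ≤ δ := by
  rw [abs_le] at h ⊢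
  constructor <;> nlinarith

section GramSchmidt

variable {F : Type*} [NormedAddCommGroup F] [InnerProductSpace ℝ F]

theorem Orthonormal.fin_cons {n : ℕ} {w : Fin n → F} (hw : Orthonormal ℝ w) {v : F}
    (hv : ‖v‖ = 1) (hvw : ∀ j, ⟪w j, v⟫ = 0) :
    Orthonormal ℝ (Fin.cons v w : Fin (n + 1) → F) := by
  have hwv : ∀ j, ⟪v, w j⟫ = 0 := fun j => by rw [real_inner_comm]; exact hvw j
  rw [orthonormal_iff_ite] at hw ⊢
  intro i j
  cases i using Fin.cases <;> cases j using Fin.cases <;>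
    simp [hv, hvw, hwv, hw, (Fin.succ_ne_zero _).symm]

theorem Orthonormal.norm_sum_inner_smul_le {ι : Type*} [Fintype ι] {w : ι → F}
    (hw : Orthonormal ℝ w) (u : F) {a : ℝ} (hwu : ∀ j, |⟪w j, u⟫| ≤ a) :
    ‖∑ j, ⟪w j, u⟫ • w j‖ ≤ Fintype.card ι * a := by
  calc ‖∑ j, ⟪w j, u⟫ • w j‖ ≤ ∑ j, ‖⟪w j, u⟫ • w j‖ := norm_sum_le _ _
    _ ≤ ∑ _j : ι, a := by
        gcongr with j
        rw [norm_smul, hw.1 j, mul_one, Real.norm_eq_abs]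
        exact hwu j
    _ = Fintype.card ι * a := by simp

theorem OrthonormalBasis.norm_le_card_mul {ι : Type*} [Fintype ι] (b : OrthonormalBasis ι ℝ F)
    (x : F) {a : ℝ} (h : ∀ i, |⟪b i, x⟫| ≤ a) : ‖x‖ ≤ Fintype.card ι * a := by
  simpa only [b.sum_repr'] using b.orthonormal.norm_sum_inner_smul_le x h

theorem norm_inv_norm_smul_sub_self {v : F} (hv : v ≠ 0) : ‖‖v‖⁻¹ • v - v‖ = |1 - ‖v‖| := by
  have hv' : ‖v‖ ≠ 0 := norm_ne_zero_iff.2 hv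
  rw [show ‖v‖⁻¹ • v - v = (‖v‖⁻¹ - 1) • v by rw [sub_smul, one_smul], norm_smul,
    Real.norm_eq_abs, ← abs_norm v, ← abs_mul, abs_norm]
  congr 1
  field_simp

/-- The witness is `u` minus its projection `s` onto the span of `w`, normalized. -/
theorem Orthonormal.exists_unit_orthogonal_near {ι : Type*} [Fintype ι] {w : ι → F}
    (hw : Orthonormal ℝ w) {u : F} {a b : ℝ} (hwu : ∀ j, |⟪w j, u⟫| ≤ a)
    (hu : |‖u‖ - 1| ≤ b) (hab : Fintype.card ι * a + b < 1) :
    ∃ v, ‖v‖ = 1 ∧ (∀ j, ⟪w j, v⟫ = 0) ∧ ‖v - u‖ ≤ 2 * (Fintype.card ι * a) + b := by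
  set s := ∑ j, ⟪w j, u⟫ • w j
  have hs : ‖s‖ ≤ Fintype.card ι * a := hw.norm_sum_inner_smul_le u hwu
  have horth : ∀ j, ⟪w j, u - s⟫ = 0 := fun j => by
    rw [inner_sub_right, hw.inner_right_fintype, sub_self]
  have hnorm : |‖u - s‖ - 1| ≤ ‖s‖ + b := by
    have := abs_norm_sub_norm_le (u - s) u
    rw [sub_sub_cancel_left, norm_neg] at this
    calc |‖u - s‖ - 1| ≤ |‖u - s‖ - ‖u‖| + |‖u‖ - 1| := abs_sub_le _ _ _
      _ ≤ ‖s‖ + b := add_le_add this hu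
  have hne : u - s ≠ 0 := by
    intro h
    rw [h, norm_zero, zero_sub, abs_neg, abs_one] at hnorm
    linarith
  refine ⟨‖u - s‖⁻¹ • (u - s), norm_smul_inv_norm hne, fun j => ?_, ?_⟩
  · rw [real_inner_smul_right, horth, mul_zero]
  · calc ‖‖u - s‖⁻¹ • (u - s) - u‖
        ≤ ‖‖u - s‖⁻¹ • (u - s) - (u - s)‖ + ‖(u - s) - u‖ :=
          norm_sub_le_norm_sub_add_norm_sub _ _ _
      _ = |1 - ‖u - s‖| + ‖s‖ := by
        rw [norm_inv_norm_smul_sub_self hne, sub_sub_cancel_left, norm_neg]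
      _ ≤ 2 * (Fintype.card ι * a) + b := by
        rw [abs_sub_comm]
        linarith

/-- A Gram–Schmidt step on `n` orthonormalized vectors with error `c δ` costs
`(2n (2c + 1) + 1) δ ≤ (6n + 1) c δ`. -/
def gramSchmidtErrorConst : ℕ → ℝ
  | 0 => 1
  | n + 1 => (6 * n + 1) * gramSchmidtErrorConst n

theorem one_le_gramSchmidtErrorConst (n : ℕ) : 1 ≤ gramSchmidtErrorConst n := by
  induction n with
  | zero => simp [gramSchmidtErrorConst]
  | succ n ih =>
    rw [gramSchmidtErrorConst]
    nlinarith [(n.cast_nonneg : (0 : ℝ) ≤ n)]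

theorem gramSchmidtErrorConst_le_succ (n : ℕ) :
    gramSchmidtErrorConst n ≤ gramSchmidtErrorConst (n + 1) := by
  rw [gramSchmidtErrorConst]
  nlinarith [(n.cast_nonneg : (0 : ℝ) ≤ n), one_le_gramSchmidtErrorConst n]

theorem exists_orthonormal_near_of_abs_inner_sub_le {n : ℕ} (u : Fin n → F) {δ : ℝ}
    (hδ : 0 ≤ δ) (hu : ∀ i j, |⟪u i, u j⟫ - if i = j then 1 else 0| ≤ δ)
    (hsmall : gramSchmidtErrorConst n * δ ≤ 1 / 2) :
    ∃ w : Fin n → F, Orthonormal ℝ w ∧ ∀ i, ‖w i - u i‖ ≤ gramSchmidtErrorConst n * δ := by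
  induction n with
  | zero => exact ⟨u, ⟨fun i => i.elim0, fun i => i.elim0⟩, fun i => i.elim0⟩
  | succ n ih =>
    set c := gramSchmidtErrorConst n
    have hc : 1 ≤ c := one_le_gramSchmidtErrorConst n
    have hcc : c ≤ gramSchmidtErrorConst (n + 1) := gramSchmidtErrorConst_le_succ n
    obtain ⟨w, hw, hwu⟩ := ih (fun i => u i.succ)
      (fun i j => by simpa [Fin.succ_inj] using hu i.succ j.succ) (by nlinarith)
    have hu0 : |‖u 0‖ ^ 2 - 1| ≤ δ := by simpa [real_inner_self_eq_norm_sq] using hu 0 0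
    have hu0_le : ‖u 0‖ ≤ 2 := by nlinarith [(abs_le.1 hu0).2, norm_nonneg (u 0)]
    have hcoef : ∀ j, |⟪w j, u 0⟫| ≤ (2 * c + 1) * δ := fun j => by
      have hcross : |⟪u j.succ, u 0⟫| ≤ δ := by simpa [Fin.succ_ne_zero] using hu j.succ 0
      calc |⟪w j, u 0⟫| = |⟪w j - u j.succ, u 0⟫ + ⟪u j.succ, u 0⟫| := by
            rw [inner_sub_left, sub_add_cancel]
        _ ≤ ‖w j - u j.succ‖ * ‖u 0‖ + δ :=
            (abs_add_le _ _).trans (add_le_add (abs_real_inner_le_norm _ _) hcross)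
        _ ≤ c * δ * 2 + δ := by gcongr; exact hwu j
        _ = (2 * c + 1) * δ := by ring
    have hstep : 2 * (n * ((2 * c + 1) * δ)) + δ ≤ gramSchmidtErrorConst (n + 1) * δ := by
      rw [gramSchmidtErrorConst]
      nlinarith [(n.cast_nonneg : (0 : ℝ) ≤ n), mul_nonneg (n.cast_nonneg : (0 : ℝ) ≤ n) hδ]
    obtain ⟨v, hv, hvw, hvu⟩ := hw.exists_unit_orthogonal_near hcoef
      (abs_sub_one_le_of_abs_sq_sub_one_le (norm_nonneg _) hu0)
      (by rw [Fintype.card_fin]; nlinarith [mul_nonneg (n.cast_nonneg : (0 : ℝ) ≤ n) hδ])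
    refine ⟨Fin.cons v w, hw.fin_cons hv hvw, fun i => ?_⟩
    cases i using Fin.cases with
    | zero => simpa using hvu.trans (by rw [Fintype.card_fin]; exact hstep)
    | succ j => simpa using (hwu j).trans (by gcongr)

end GramSchmidt

theorem abs_sq_sub_sq_le_of_near {a b ε : ℝ} (ha : 0 ≤ a) (hε : 0 ≤ ε) (hε1 : ε ≤ 1)
    (hlow : (1 - ε) * a ≤ b) (hup : b ≤ (1 + ε) * a) : |b ^ 2 - a ^ 2| ≤ 3 * ε * a ^ 2 := by
  have hb : 0 ≤ b := (by positivity : 0 ≤ (1 - ε) * a).trans hlow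
  have hlow' : ((1 - ε) * a) ^ 2 ≤ b ^ 2 := pow_le_pow_left₀ (by positivity) hlow 2
  have hup' : b ^ 2 ≤ ((1 + ε) * a) ^ 2 := pow_le_pow_left₀ hb hup 2
  rw [abs_le]
  constructor <;>
    nlinarith [mul_nonneg hε (sq_nonneg a), mul_nonneg (mul_nonneg hε hε) (sq_nonneg a)]

/-- Polarization: `⟪x, y⟫` is determined by the squared distances between `0`, `x` and `y`. -/
theorem abs_inner_map_sub_inner_le {E F : Type*} [NormedAddCommGroup E] [InnerProductSpace ℝ E]
    [NormedAddCommGroup F] [InnerProductSpace ℝ F] {S : Set E} {g : E → F} {δ : ℝ}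
    (h0 : 0 ∈ S) (hg0 : g 0 = 0)
    (hg : ∀ x ∈ S, ∀ y ∈ S, |‖g x - g y‖ ^ 2 - ‖x - y‖ ^ 2| ≤ δ * ‖x - y‖ ^ 2)
    {x y : E} (hx : x ∈ S) (hy : y ∈ S) :
    |⟪g x, g y⟫ - ⟪x, y⟫| ≤ δ / 2 * (‖x‖ ^ 2 + ‖y‖ ^ 2 + ‖x - y‖ ^ 2) := by
  have hx0 := hg x hx 0 h0
  have hy0 := hg y hy 0 h0
  have hxy := hg x hx y hy
  rw [hg0, sub_zero, sub_zero] at hx0 hy0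
  rw [norm_sub_sq_real (g x), norm_sub_sq_real x] at hxy
  rw [abs_le] at hx0 hy0 hxy ⊢
  rw [norm_sub_sq_real x]
  constructor <;> nlinarith

def IsNearIsometryOn {X Y : Type*} [PseudoMetricSpace X] [PseudoMetricSpace Y] (ε : ℝ)
    (S : Set X) (g : X → Y) : Prop :=
  ∀ x ∈ S, ∀ y ∈ S, (1 - ε) * dist x y ≤ dist (g x) (g y) ∧ dist (g x) (g y) ≤ (1 + ε) * dist x y

namespace IsNearIsometryOn

section Normed

variable {E F : Type*} [NormedAddCommGroup E] [NormedAddCommGroup F] {ε : ℝ} {S : Set E}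
  {g : E → F}

theorem abs_norm_sub_sq_sub_le (hg : IsNearIsometryOn ε S g) (hε : 0 ≤ ε) (hε1 : ε ≤ 1)
    {x y : E} (hx : x ∈ S) (hy : y ∈ S) :
    |‖g x - g y‖ ^ 2 - ‖x - y‖ ^ 2| ≤ 3 * ε * ‖x - y‖ ^ 2 := by
  obtain ⟨hlow, hup⟩ := hg x hx y hy
  rw [dist_eq_norm, dist_eq_norm] at hlow hup
  exact abs_sq_sub_sq_le_of_near (norm_nonneg _) hε hε1 hlow hup

theorem norm_le (hg : IsNearIsometryOn ε S g) (h0 : 0 ∈ S) (hg0 : g 0 = 0) {y : E}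
    (hy : y ∈ S) : ‖g y‖ ≤ (1 + ε) * ‖y‖ := by
  simpa [hg0] using (hg y hy 0 h0).2

theorem rescale [NormedSpace ℝ E] [NormedSpace ℝ F] (hg : IsNearIsometryOn ε S g) (z : E)
    {r : ℝ} (hr : 0 < r) :
    IsNearIsometryOn ε ((fun x => z + r • x) ⁻¹' S) (fun x => r⁻¹ • (g (z + r • x) - g z)) := by
  intro x hx y hy
  obtain ⟨hlow, hup⟩ := hg _ hx _ hy
  rw [dist_add_left, dist_smul₀, Real.norm_of_nonneg hr.le] at hlow hup
  rw [dist_smul₀, dist_sub_right, Real.norm_of_nonneg (inv_nonneg.2 hr.le)]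
  constructor
  · rw [le_inv_mul_iff₀ hr]; linarith
  · rw [inv_mul_le_iff₀ hr]; linarith

end Normed

variable {F : Type*} [NormedAddCommGroup F] [InnerProductSpace ℝ F] {n : ℕ} {ε : ℝ} {S : Set F}
  {g : F → F}

theorem abs_inner_sub_inner_le (hg : IsNearIsometryOn ε S g) (hε : 0 ≤ ε) (hε1 : ε ≤ 1)
    (h0 : 0 ∈ S) (hg0 : g 0 = 0) {x y : F} (hx : x ∈ S) (hy : y ∈ S) :
    |⟪g x, g y⟫ - ⟪x, y⟫| ≤ 3 * ε / 2 * (‖x‖ ^ 2 + ‖y‖ ^ 2 + ‖x - y‖ ^ 2) :=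
  abs_inner_map_sub_inner_le h0 hg0 (fun _ hx _ hy => hg.abs_norm_sub_sq_sub_le hε hε1 hx hy) hx hy

theorem exists_orthonormal_near_image (b : OrthonormalBasis (Fin n) ℝ F)
    (hg : IsNearIsometryOn ε S g) (hε : 0 ≤ ε) (hε1 : ε ≤ 1) (hS : Metric.closedBall 0 1 ⊆ S)
    (hg0 : g 0 = 0) (hsmall : gramSchmidtErrorConst n * (9 * ε) ≤ 1 / 2) :
    ∃ w : Fin n → F, Orthonormal ℝ w ∧
      ∀ i, ‖w i - g (b i)‖ ≤ gramSchmidtErrorConst n * (9 * ε) := by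
  have h0 : (0 : F) ∈ S := hS (Metric.mem_closedBall_self zero_le_one)
  have hbS : ∀ i, b i ∈ S := fun i => hS (by simp [b.norm_eq_one])
  refine exists_orthonormal_near_of_abs_inner_sub_le _ (by positivity) (fun i j => ?_) hsmall
  have hbij : ‖b i - b j‖ ^ 2 ≤ 2 ^ 2 := by
    gcongr
    simpa [b.norm_eq_one, one_add_one_eq_two] using norm_sub_le (b i) (b j)
  rw [← orthonormal_iff_ite.1 b.orthonormal i j]
  refine (hg.abs_inner_sub_inner_le hε hε1 h0 hg0 (hbS i) (hbS j)).trans ?_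
  rw [b.norm_eq_one, b.norm_eq_one]
  nlinarith [mul_le_mul_of_nonneg_left hbij hε]

theorem exists_linearIsometryEquiv_near_of_small (b : OrthonormalBasis (Fin n) ℝ F)
    (hg : IsNearIsometryOn ε S g) (hε : 0 ≤ ε) (hS : Metric.closedBall 0 1 ⊆ S)
    (hg0 : g 0 = 0) (hsmall : gramSchmidtErrorConst n * (9 * ε) ≤ 1 / 2) :
    ∃ M : F ≃ₗᵢ[ℝ] F, ∀ y ∈ S,
      ‖g y - M y‖ ≤ n * ((18 * gramSchmidtErrorConst n + 3) * ε * (1 + ‖y‖) ^ 2) := by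
  set c := gramSchmidtErrorConst n
  have hc : 1 ≤ c := one_le_gramSchmidtErrorConst n
  have hε1 : ε ≤ 1 := by nlinarith
  have h0 : (0 : F) ∈ S := hS (Metric.mem_closedBall_self zero_le_one)
  obtain ⟨w, hw, hwu⟩ := hg.exists_orthonormal_near_image b hε hε1 hS hg0 hsmall
  have : FiniteDimensional ℝ F := b.toBasis.finiteDimensional_of_finite
  let bw : OrthonormalBasis (Fin n) ℝ F := OrthonormalBasis.mk hw
    (hw.linearIndependent.span_eq_top_of_card_eq_finrank'
      (Module.finrank_eq_card_basis b.toBasis).symm).ge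
  set M := b.equiv bw (Equiv.refl _)
  have hMb : ∀ i, M (b i) = w i := fun i => by simp [M, bw]
  refine ⟨M, fun y hy => ?_⟩
  have hgy : ‖g y‖ ≤ 2 * ‖y‖ := (hg.norm_le h0 hg0 hy).trans (by gcongr; linarith)
  have hcoord : ∀ i, |⟪bw i, g y - M y⟫| ≤ (18 * c + 3) * ε * (1 + ‖y‖) ^ 2 := fun i => by
    have hsplit : ⟪bw i, g y - M y⟫ = ⟪w i - g (b i), g y⟫ + (⟪g (b i), g y⟫ - ⟪b i, y⟫) := by
      rw [OrthonormalBasis.coe_mk, inner_sub_right, ← hMb, M.inner_map_map, hMb, inner_sub_left]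
      ring
    have hby : ‖b i - y‖ ≤ 1 + ‖y‖ := by simpa [b.norm_eq_one] using norm_sub_le (b i) y
    have h1 : |⟪w i - g (b i), g y⟫| ≤ c * (9 * ε) * (2 * ‖y‖) :=
      (abs_real_inner_le_norm _ _).trans (by gcongr; exact hwu i)
    have h2 := hg.abs_inner_sub_inner_le hε hε1 h0 hg0
      (hS (by simp [b.norm_eq_one] : b i ∈ Metric.closedBall 0 1)) hy
    rw [b.norm_eq_one] at h2
    rw [hsplit]
    refine (abs_add_le _ _).trans ?_
    nlinarith [norm_nonneg y, norm_nonneg (b i - y), mul_nonneg hε (norm_nonneg y),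
      mul_nonneg (mul_nonneg hε (norm_nonneg y)) (norm_nonneg y),
      mul_le_mul_of_nonneg_left (pow_le_pow_left₀ (norm_nonneg _) hby 2) hε]
  simpa using bw.norm_le_card_mul _ hcoord

theorem exists_linearIsometryEquiv_near (b : OrthonormalBasis (Fin n) ℝ F)
    (hg : IsNearIsometryOn ε S g) (hε : 0 ≤ ε) (hS : Metric.closedBall 0 1 ⊆ S)
    (hg0 : g 0 = 0) :
    ∃ M : F ≃ₗᵢ[ℝ] F, ∀ y ∈ S,
      ‖g y - M y‖ ≤ (n + 1) * (36 * gramSchmidtErrorConst n + 3) * ε * (1 + ‖y‖) ^ 2 := by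
  set c := gramSchmidtErrorConst n
  have hc : 1 ≤ c := one_le_gramSchmidtErrorConst n
  by_cases hsmall : c * (9 * ε) ≤ 1 / 2
  · obtain ⟨M, hM⟩ := hg.exists_linearIsometryEquiv_near_of_small b hε hS hg0 hsmall
    refine ⟨M, fun y hy => (hM y hy).trans ?_⟩
    have hconst : (n : ℝ) * (18 * c + 3) ≤ (n + 1) * (36 * c + 3) := by
      nlinarith [(n.cast_nonneg : (0 : ℝ) ≤ n)]
    nlinarith [mul_le_mul_of_nonneg_right hconst (by positivity : 0 ≤ ε * (1 + ‖y‖) ^ 2)]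
  · refine ⟨LinearIsometryEquiv.refl ℝ F, fun y hy => ?_⟩
    have hgy := hg.norm_le (hS (Metric.mem_closedBall_self zero_le_one)) hg0 hy
    calc ‖g y - y‖ ≤ ‖g y‖ + ‖y‖ := norm_sub_le _ _
      _ ≤ (36 * c + 1) * ε * ‖y‖ := by nlinarith [norm_nonneg y]
      _ ≤ (n + 1) * (36 * c + 3) * ε * (1 + ‖y‖) ^ 2 := by
        gcongr
        · nlinarith [(n.cast_nonneg : (0 : ℝ) ≤ n)]
        · nlinarith [norm_nonneg y]

end IsNearIsometryOn

/-- If `φ` is an `ε`-near isometry on a compact set `E ⊆ ℝ^D` containing a ball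
`B(z,r)`, then there is a Euclidean motion `A = (x ↦ Mx + b)` with
`|φ(y) - A(y)| ≤ C K² ε r` for all `K ≥ 1` and `y ∈ B(z, Kr) ∩ E`, where `C` depends
only on `D`. -/
theorem stmt_10 {D : ℕ} :
    ∃ C > (0 : ℝ), ∀ (E : Set (EuclideanSpace ℝ (Fin D))), IsCompact E →
      ∀ (z : EuclideanSpace ℝ (Fin D)) (r ε : ℝ), 0 < r → 0 ≤ ε →
      Metric.closedBall z r ⊆ E →
      ∀ φ : EuclideanSpace ℝ (Fin D) → EuclideanSpace ℝ (Fin D),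
      (∀ x ∈ E, ∀ y ∈ E, (1 - ε) * dist x y ≤ dist (φ x) (φ y) ∧
        dist (φ x) (φ y) ≤ (1 + ε) * dist x y) →
      ∃ (M : EuclideanSpace ℝ (Fin D) ≃ₗᵢ[ℝ] EuclideanSpace ℝ (Fin D))
        (b : EuclideanSpace ℝ (Fin D)),
        ∀ K ≥ (1 : ℝ), ∀ y ∈ Metric.ball z (K * r) ∩ E,
          ‖φ y - (M y + b)‖ ≤ C * K ^ 2 * ε * r := by
  set C₀ := ((D : ℝ) + 1) * (36 * gramSchmidtErrorConst D + 3)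
  have hC₀ : 0 < C₀ := by have := one_le_gramSchmidtErrorConst D; positivity
  refine ⟨4 * C₀, by positivity, fun E _ z r ε hr hε hball φ hφ => ?_⟩
  obtain ⟨M, hM⟩ := IsNearIsometryOn.exists_linearIsometryEquiv_near
    (EuclideanSpace.basisFun (Fin D) ℝ) (IsNearIsometryOn.rescale (g := φ) hφ z hr) hε
    (fun x hx => hball (by simpa [norm_smul, abs_of_pos hr] using
      mul_le_of_le_one_right hr.le (mem_closedBall_zero_iff.1 hx)))
    (by simp)
  refine ⟨M, φ z - M z, fun K hK y ⟨hyK, hyE⟩ => ?_⟩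
  set η := r⁻¹ • (y - z)
  have hzη : z + r • η = y := by simp [η, smul_inv_smul₀ hr.ne']
  have hη : ‖η‖ ≤ K := by
    rw [norm_smul, Real.norm_of_nonneg (inv_nonneg.2 hr.le), ← dist_eq_norm, inv_mul_le_iff₀ hr,
      mul_comm]
    exact (Metric.mem_ball.1 hyK).le
  have hφy := hM η (by simpa [hzη] using hyE)
  rw [hzη] at hφy
  have hdiff : φ y - (M y + (φ z - M z)) = r • (r⁻¹ • (φ y - φ z) - M η) := by
    rw [map_smul, map_sub, ← smul_sub, smul_inv_smul₀ hr.ne']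
    abel
  rw [hdiff, norm_smul, Real.norm_of_nonneg hr.le]
  calc r * ‖r⁻¹ • (φ y - φ z) - M η‖ ≤ r * (C₀ * ε * (1 + ‖η‖) ^ 2) := by gcongr
    _ ≤ r * (C₀ * ε * (2 * K) ^ 2) := by gcongr; linarith
    _ = 4 * C₀ * K ^ 2 * ε * r := by ring
end

section
/- Let x_0, ..., x_D ∈ ℝ^D with x_0 = 0, all |x_i| ≤ 1, and |x_1 ∧ ... ∧ x_D| ≥ c η^D for some 0 < η < 1, c > 0. Let A ∈ O(D) and let A* be a linear map with |(A* - A) x_i| ≤ C' ε for i = 1,...,D. Then ‖A* - A‖ ≤ C ε η^{-D} in operator norm, where C depends only on D, c, C'. Consequently, if ε η^{-D} is smaller than a dimensional constant, then det(A*) has the same sign as det(A). -/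
/-!
Writing `L` for the matrix with columns `xᵢ`, every `v` equals `∑ⱼ (L⁻¹ v)ⱼ xⱼ`, and by Cramer's
rule the entries of `L⁻¹` are at most `D! / |det L| ≤ D! / (c ηᴰ)` in absolute value. Hence
`‖(A* - A) v‖ ≤ D! D² C' ε η⁻ᴰ ‖v‖`. Since `det` is continuous and equals `1` at the identity,
it stays positive on a neighbourhood of the identity; `A⁻¹ A*` lies in such a neighbourhood once
`‖A* - A‖` is small, and `det A* · det A = det (A⁻¹ A*) · (det A)²`.
-/

open Topology Matrix

namespace Matrix

variable {ι : Type*} [Fintype ι] [DecidableEq ι]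

theorem abs_adjugate_apply_le {A : Matrix ι ι ℝ} (hA : ∀ i j, |A i j| ≤ 1) (i j : ι) :
    |A.adjugate i j| ≤ (Fintype.card ι).factorial := by
  have hrow : ∀ k l, |A.updateRow j (Pi.single i 1) k l| ≤ 1 := by
    intro k l
    rw [updateRow_apply]
    split_ifs
    · rw [Pi.single_apply]; split_ifs <;> simp
    · exact hA k l
  simpa [adjugate_apply] using det_le (abv := AbsoluteValue.abs) hrow

theorem abs_inv_apply_le {A : Matrix ι ι ℝ} (hA : ∀ i j, |A i j| ≤ 1) (i j : ι) :
    |A⁻¹ i j| ≤ (Fintype.card ι).factorial / |A.det| := by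
  rw [inv_def, smul_apply, smul_eq_mul, Ring.inverse_eq_inv', abs_mul, abs_inv, inv_mul_eq_div]
  exact div_le_div_of_nonneg_right (abs_adjugate_apply_le hA i j) (abs_nonneg _)

theorem abs_inv_mulVec_apply_le {A : Matrix ι ι ℝ} (hA : ∀ i j, |A i j| ≤ 1)
    (v : EuclideanSpace ℝ ι) (j : ι) :
    |(A⁻¹ *ᵥ ⇑v) j| ≤ (Fintype.card ι).factorial * Fintype.card ι / |A.det| * ‖v‖ :=
  calc |(A⁻¹ *ᵥ ⇑v) j| ≤ ∑ i, |A⁻¹ j i| * |(v i : ℝ)| := by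
        simpa only [mulVec, dotProduct, abs_mul] using
          Finset.abs_sum_le_sum_abs (fun i => A⁻¹ j i * v i) Finset.univ
    _ ≤ ∑ _i : ι, (Fintype.card ι).factorial / |A.det| * ‖v‖ := by
        gcongr with i
        · exact abs_inv_apply_le hA j i
        · exact PiLp.norm_apply_le v i
    _ = _ := by simp only [Finset.sum_const, Finset.card_univ, nsmul_eq_mul]; ring

end Matrix

section Columns

variable {ι : Type*} [Fintype ι] [DecidableEq ι]

theorem EuclideanSpace.eq_sum_inv_mulVec_smul {x : ι → EuclideanSpace ℝ ι}
    (hx : (Matrix.of fun i j => x j i).det ≠ 0) (v : EuclideanSpace ℝ ι) :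
    v = ∑ j, ((Matrix.of fun i j => x j i)⁻¹ *ᵥ v) j • x j := by
  set L := Matrix.of fun i j => x j i
  have hL : L *ᵥ (L⁻¹ *ᵥ v) = v := by
    rw [mulVec_mulVec, mul_nonsing_inv _ (isUnit_iff_ne_zero.2 hx), one_mulVec]
  ext i
  conv_lhs => rw [← hL]
  simp [L, mulVec, dotProduct, mul_comm]

theorem ContinuousLinearMap.opNorm_le_of_norm_apply_columns_le {F : Type*} [NormedAddCommGroup F]
    [NormedSpace ℝ F] (T : EuclideanSpace ℝ ι →L[ℝ] F) {x : ι → EuclideanSpace ℝ ι}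
    (hx : ∀ i, ‖x i‖ ≤ 1) (hdet : (Matrix.of fun i j => x j i).det ≠ 0) {M : ℝ} (hM : 0 ≤ M)
    (hT : ∀ j, ‖T (x j)‖ ≤ M) :
    ‖T‖ ≤ (Fintype.card ι).factorial * Fintype.card ι ^ 2 * M /
      |(Matrix.of fun i j => x j i).det| := by
  set L := Matrix.of fun i j => x j i
  have hL : ∀ i j, |L i j| ≤ 1 := fun i j => (PiLp.norm_apply_le (x j) i).trans (hx j)
  refine T.opNorm_le_bound (by positivity) fun v => ?_
  calc ‖T v‖ = ‖∑ j, (L⁻¹ *ᵥ ⇑v) j • T (x j)‖ := by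
        conv_lhs => rw [EuclideanSpace.eq_sum_inv_mulVec_smul hdet v]
        simp only [map_sum, map_smul]
        rfl
    _ ≤ ∑ j, |(L⁻¹ *ᵥ ⇑v) j| * ‖T (x j)‖ := by
        refine (norm_sum_le _ _).trans_eq ?_
        simp only [norm_smul, Real.norm_eq_abs]
    _ ≤ ∑ _j : ι, (Fintype.card ι).factorial * Fintype.card ι / |L.det| * ‖v‖ * M := by
        gcongr with j
        · exact Matrix.abs_inv_mulVec_apply_le hL v j
        · exact hT j
    _ = _ := by simp only [Finset.sum_const, Finset.card_univ, nsmul_eq_mul]; ring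

end Columns

theorem ContinuousLinearMap.eventually_det_pos_nhds_id (E : Type*) [NormedAddCommGroup E]
    [NormedSpace ℝ E] : ∀ᶠ T in 𝓝 (ContinuousLinearMap.id ℝ E), 0 < T.det :=
  continuousAt_const.eventually_lt ContinuousLinearMap.continuous_det.continuousAt
    (by simp [ContinuousLinearMap.det])

theorem LinearIsometryEquiv.exists_det_mul_det_pos_of_norm_sub_le (E : Type*)
    [NormedAddCommGroup E] [NormedSpace ℝ E] :
    ∃ κ > (0 : ℝ), ∀ (A : E ≃ₗᵢ[ℝ] E) (B : E →L[ℝ] E),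
      ‖B - A.toLinearIsometry.toContinuousLinearMap‖ ≤ κ →
        0 < LinearMap.det (B : E →ₗ[ℝ] E) * LinearMap.det (A.toLinearEquiv : E →ₗ[ℝ] E) := by
  obtain ⟨δ, hδ, hball⟩ :=
    Metric.eventually_nhds_iff.1 (ContinuousLinearMap.eventually_det_pos_nhds_id E)
  refine ⟨δ / 2, half_pos hδ, fun A B hB => ?_⟩
  set Ainv := A.symm.toLinearIsometry.toContinuousLinearMap
  have hclose : dist (Ainv.comp B) (ContinuousLinearMap.id ℝ E) < δ := by
    have hsub : Ainv.comp B - ContinuousLinearMap.id ℝ E =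
        Ainv.comp (B - A.toLinearIsometry.toContinuousLinearMap) := by
      ext v; simp [Ainv]
    rw [dist_eq_norm, hsub, LinearIsometry.norm_toContinuousLinearMap_comp]
    linarith
  have hfactor : (B : E →ₗ[ℝ] E) = (A.toLinearEquiv : E →ₗ[ℝ] E) ∘ₗ (Ainv.comp B : E →L[ℝ] E) := by
    ext v; simp [Ainv]
  have hA : LinearMap.det (A.toLinearEquiv : E →ₗ[ℝ] E) ≠ 0 := A.toLinearEquiv.isUnit_det'.ne_zero
  rw [hfactor, LinearMap.det_comp, mul_comm, ← mul_assoc]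
  exact mul_pos (mul_self_pos.2 hA) (hball hclose)

/-- Cramer's rule bound: if `x₁, ..., x_D ∈ ℝ^D` have norms `≤ 1` and
`|x₁ ∧ ... ∧ x_D| = |det L| ≥ c η^D` (`L` the matrix with columns `x_i`), `A ∈ O(D)`
and `A*` is linear with `|(A* - A) x_i| ≤ C'ε`, then `‖A* - A‖ ≤ C ε / η^D`;
and if `ε/η^D` is below a dimensional constant then `det A*` and `det A` have the
same sign. -/
theorem stmt_17 (D : ℕ) (hD : 0 < D) (c C' : ℝ) (hc : 0 < c) (hC' : 0 < C') :
    ∃ C > (0 : ℝ), ∃ κ > (0 : ℝ), ∀ (η ε : ℝ)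
      (x : Fin D → EuclideanSpace ℝ (Fin D))
      (A : EuclideanSpace ℝ (Fin D) ≃ₗᵢ[ℝ] EuclideanSpace ℝ (Fin D))
      (Astar : EuclideanSpace ℝ (Fin D) →L[ℝ] EuclideanSpace ℝ (Fin D)),
      0 < η → η < 1 → 0 ≤ ε →
      (∀ i, ‖x i‖ ≤ 1) →
      c * η ^ D ≤ |(Matrix.of fun i j : Fin D => x j i).det| →
      (∀ i, ‖Astar (x i) - A (x i)‖ ≤ C' * ε) →
      ‖Astar - A.toLinearIsometry.toContinuousLinearMap‖ ≤ C * ε / η ^ D ∧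
        (ε / η ^ D ≤ κ →
          0 < LinearMap.det (Astar : EuclideanSpace ℝ (Fin D) →ₗ[ℝ] EuclideanSpace ℝ (Fin D)) *
              LinearMap.det (A.toLinearEquiv :
                EuclideanSpace ℝ (Fin D) →ₗ[ℝ] EuclideanSpace ℝ (Fin D))) := by
  obtain ⟨κ₀, hκ₀, hdet_pos⟩ :=
    LinearIsometryEquiv.exists_det_mul_det_pos_of_norm_sub_le (EuclideanSpace ℝ (Fin D))
  set C : ℝ := D.factorial * D ^ 2 * C' / c
  have hC : 0 < C := by positivity
  refine ⟨C, hC, κ₀ / C, div_pos hκ₀ hC, fun η ε x A Astar hη _ hε hx hdet hAx => ?_⟩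
  have hcη : 0 < c * η ^ D := by positivity
  have hnorm : ‖Astar - A.toLinearIsometry.toContinuousLinearMap‖ ≤ C * ε / η ^ D :=
    calc _ ≤ D.factorial * D ^ 2 * (C' * ε) / |(Matrix.of fun i j : Fin D => x j i).det| := by
          simpa only [Fintype.card_fin] using
            (Astar - A.toLinearIsometry.toContinuousLinearMap).opNorm_le_of_norm_apply_columns_le
              hx (abs_pos.1 (hcη.trans_le hdet)) (by positivity) hAx
      _ ≤ D.factorial * D ^ 2 * (C' * ε) / (c * η ^ D) := by gcongr
      _ = C * ε / η ^ D := by simp only [C]; field_simp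
  refine ⟨hnorm, fun hκ => hdet_pos A Astar ?_⟩
  calc _ ≤ C * (ε / η ^ D) := by rwa [mul_div_assoc] at hnorm
    _ ≤ C * (κ₀ / C) := by gcongr
    _ = κ₀ := mul_div_cancel₀ _ hC.ne'
end
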